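/- Fix K, r, S ∈ [1,∞), vectors θ_d ∈ [−S,S]^d for d ∈ ℕ, and a K-Lipschitz function f : ℝ → ℝ with |f(0)| ≤ K. Define the ridge functions g_d : ℝ^d → ℝ by g_d(x) = f(θ_d · x), where · denotes the Euclidean inner product. Then for every d ∈ ℕ and ε ∈ (0,1] there exists a skeleton φ with ReLU-realization R_ReLU(φ) : ℝ^d → ℝ such that: 1) sup_{x∈[−r,r]^d} |g_d(x) − R_ReLU(φ)(x)| ≤ ε; 2) R_ReLU(φ) is √d·K·S-Lipschitz on ℝ^d; 3) P(φ) ≤ (1/7)·10³·K²·r·S²·d⁶·ε^{−1}. -/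

import Mathlib

open scoped BigOperators ENNReal

noncomputable section

/-- The rectified linear unit activation function. -/
def ReLU (x : ℝ) : ℝ := max x 0

/-- Truncation of a real sequence to its first `n` entries. -/
def trunc (n : ℕ) (x : ℕ → ℝ) : ℕ → ℝ := fun j => if j < n then x j else 0

/-- Embedding of a Euclidean vector into the space of real sequences. -/
def emb (n : ℕ) (x : EuclideanSpace ℝ (Fin n)) : ℕ → ℝ :=
  fun j => if h : j < n then x ⟨j, h⟩ else 0

/-- A neural network skeleton of depth `Dm + 1`.  The layer dimensions are
`l 0, …, l (Dm + 1)`; the weight matrix of layer `k + 1` is `V k` (a matrix of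
size `l (k+1) × l k`, stored as a doubly indexed sequence) and its bias is `b k`.
Entries beyond the relevant ranges are irrelevant junk. -/
structure NN where
  Dm : ℕ
  l : ℕ → ℕ
  V : ℕ → ℕ → ℕ → ℝ
  b : ℕ → ℕ → ℝ

namespace NN

/-- Depth `D(φ)` of a skeleton. -/
def depth (φ : NN) : ℕ := φ.Dm + 1

/-- Number of parameters `P(φ) = ∑_{k=1}^{D} l_k (l_{k-1} + 1)`. -/
def P (φ : NN) : ℕ := ∑ k ∈ Finset.range φ.depth, φ.l (k + 1) * (φ.l k + 1)

/-- The affine map `A_{k+1}(x) = V_{k+1} x + b_{k+1}` of a skeleton. -/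
def aff (φ : NN) (k : ℕ) (x : ℕ → ℝ) : ℕ → ℝ :=
  fun i => (∑ j ∈ Finset.range (φ.l k), φ.V k i j * x j) + φ.b k i

/-- State after `k` layers, with the activation applied after each affine map. -/
def hidden (a : ℝ → ℝ) (φ : NN) : ℕ → (ℕ → ℝ) → ℕ → ℝ
  | 0 => fun x => x
  | k + 1 => fun x i => a (φ.aff k (φ.hidden a k x) i)

/-- The `a`-realization `R_a(φ) = A_D ∘ a ∘ A_{D-1} ∘ ⋯ ∘ a ∘ A_1`, acting on
sequences (only the first `l 0` input coordinates and the first `l D` output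
coordinates are meaningful). -/
def fullReal (a : ℝ → ℝ) (φ : NN) (x : ℕ → ℝ) : ℕ → ℝ :=
  φ.aff φ.Dm (φ.hidden a φ.Dm (trunc (φ.l 0) x))

/-- The `a`-realization as a map `ℝ^m → ℝ^n` (meaningful when `l 0 = m` and
`l D = n`). -/
def realAs (a : ℝ → ℝ) (φ : NN) (m n : ℕ) (x : EuclideanSpace ℝ (Fin m)) :
    EuclideanSpace ℝ (Fin n) :=
  WithLp.toLp 2 (fun i => φ.fullReal a (emb m x) i)

/-- The `a`-realization as a scalar-valued map `ℝ^m → ℝ`. -/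
def realScalar (a : ℝ → ℝ) (φ : NN) (m : ℕ) (x : EuclideanSpace ℝ (Fin m)) : ℝ :=
  φ.fullReal a (emb m x) 0

/-- The `a`-realization as a map `ℝ → ℝ`. -/
def real1 (a : ℝ → ℝ) (φ : NN) (x : ℝ) : ℝ :=
  φ.fullReal a (fun j => if j = 0 then x else 0) 0

/-- Concatenation `ψ ∘ φ` of two skeletons (meaningful when
`l_{D(φ)}(φ) = l_0(ψ)`). -/
def comp (ψ φ : NN) : NN where
  Dm := φ.Dm + ψ.Dm
  l := fun k => if k < φ.depth then φ.l k else ψ.l (k + 1 - φ.depth)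
  V := fun k =>
    if k < φ.Dm then φ.V k
    else if k = φ.Dm then fun i j => ∑ m ∈ Finset.range (ψ.l 0), ψ.V 0 i m * φ.V φ.Dm m j
    else ψ.V (k - φ.Dm)
  b := fun k =>
    if k < φ.Dm then φ.b k
    else if k = φ.Dm then
      fun i => (∑ m ∈ Finset.range (ψ.l 0), ψ.V 0 i m * φ.b φ.Dm m) + ψ.b 0 i
    else ψ.b (k - φ.Dm)

/-- Offset of the `q`-th block in layer `k` of a parallelization. -/
def poff (ν : ℕ → NN) (k q : ℕ) : ℕ := ∑ j ∈ Finset.range q, (ν j).l k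

/-- Parallelization `p(φ_1, …, φ_n)` of `n` skeletons (meaningful when they all
have the same depth): block-diagonal weight matrices and concatenated biases. -/
def parallel (n : ℕ) (ν : ℕ → NN) : NN where
  Dm := (ν 0).Dm
  l := fun k => ∑ j ∈ Finset.range n, (ν j).l k
  V := fun k i j =>
    ∑ q ∈ Finset.range n,
      if poff ν (k + 1) q ≤ i ∧ i < poff ν (k + 1) q + (ν q).l (k + 1) ∧
          poff ν k q ≤ j ∧ j < poff ν k q + (ν q).l k then
        (ν q).V k (i - poff ν (k + 1) q) (j - poff ν k q)
      else 0
  b := fun k i =>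
    ∑ q ∈ Finset.range n,
      if poff ν (k + 1) q ≤ i ∧ i < poff ν (k + 1) q + (ν q).l (k + 1) then
        (ν q).b k (i - poff ν (k + 1) q)
      else 0

/-- The activation `a` fulfills the `c`-identity requirement, witnessed by the
skeleton `I`: `I` has depth 2, input and output dimension 1, hidden dimension
at most `c`, and its `a`-realization is the identity on `ℝ`. -/
def IdReq (a : ℝ → ℝ) (c : ℝ) (I : NN) : Prop :=
  I.Dm = 1 ∧ I.l 0 = 1 ∧ I.l 2 = 1 ∧ (I.l 1 : ℝ) ≤ c ∧
    ∀ x : ℕ → ℝ, I.fullReal a x 0 = x 0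

/-- The `d`-fold parallelization `I_d` of an identity skeleton. -/
def Idn (I : NN) (d : ℕ) : NN := parallel d fun _ => I

/-- Concatenate `m` identity networks after `φ`. -/
def padAfter (I φ : NN) : ℕ → NN
  | 0 => φ
  | m + 1 => comp (Idn I ((padAfter I φ m).l (padAfter I φ m).depth)) (padAfter I φ m)

/-- Concatenate `m` identity networks in front of `φ`. -/
def padBefore (I φ : NN) : ℕ → NN
  | 0 => φ
  | m + 1 => comp (padBefore I φ m) (Idn I ((padBefore I φ m).l 0))

/-- Diagonal ("staggered") parallelization `p_I(φ_1, …, φ_n)` of arbitrary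
skeletons, obtained by padding each `φ_q` with identity networks so that all
have equal depth and then parallelizing. -/
def dpar (I : NN) (n : ℕ) (ν : ℕ → NN) : NN :=
  parallel n fun q =>
    padAfter I (padBefore I (ν q) (∑ j ∈ Finset.range q, (ν j).depth))
      (∑ j ∈ Finset.Ico (q + 1) n, (ν j).depth)

end NN

/-!
On the cube `[-r, r]^d` the ridge argument `θ · x` ranges over `[-R, R]` with `R = d S r`.
Let `g` be the piecewise linear interpolant of `f` on the uniform grid of `N` cells of `[-R, R]`.
Its slopes are difference quotients of `f`, so `g` is `K`-Lipschitz, and it agrees with `f` at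
the nodes; hence `|f - g| ≤ 2 K h` for the mesh `h = 2R/N`, which is at most `ε` once
`N ≥ 4 K R / ε`. Each cell of `g` contributes a clipped ramp `ReLU (z - tᵢ) - ReLU (z - tᵢ₊₁)`,
so `x ↦ g (θ · x)` is realized by a ReLU network with one hidden layer of `2N` neurons, and it
is `K ‖θ‖ ≤ √d K S`-Lipschitz.
-/

lemma ReLU_sub_ReLU_sub {h : ℝ} (hh : 0 ≤ h) (z : ℝ) :
    ReLU z - ReLU (z - h) = min (max z 0) h := by
  simp only [ReLU, max_def, min_def]; split_ifs <;> linarith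

lemma monotone_ReLU : Monotone ReLU := fun _ _ hab => max_le_max hab le_rfl

lemma ReLU_sub_ReLU_le {a b : ℝ} (hab : a ≤ b) : ReLU b - ReLU a ≤ b - a := by
  simp only [ReLU, max_def]; split_ifs <;> linarith

lemma lipschitz_const_nonneg {f : ℝ → ℝ} {K : ℝ} (hf : ∀ x y, |f x - f y| ≤ K * |x - y|) :
    0 ≤ K := by
  simpa using (abs_nonneg _).trans (hf 1 0)

namespace PiecewiseLinear

variable (f : ℝ → ℝ) (a h : ℝ) (N : ℕ)

def node (i : ℕ) : ℝ := a + i * h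

def slope (i : ℕ) : ℝ := (f (node a h (i + 1)) - f (node a h i)) / h

def ramp (i : ℕ) (z : ℝ) : ℝ := ReLU (z - node a h i) - ReLU (z - node a h (i + 1))

def interp (z : ℝ) : ℝ := f a + ∑ i ∈ Finset.range N, slope f a h i * ramp a h i z

/-- Neuron `i < N` of `interpNet` carries the rising edge `ReLU (z - node i)` of the `i`-th ramp,
neuron `N + i` its falling edge `ReLU (z - node (i + 1))`. -/
def edgeNode (i : ℕ) : ℝ := if i < N then node a h i else node a h (i - N + 1)

def edgeSlope (i : ℕ) : ℝ := if i < N then slope f a h i else -slope f a h (i - N)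

variable {f a h}

lemma ramp_eq_min_max (hh : 0 ≤ h) (i : ℕ) (z : ℝ) :
    ramp a h i z = min (max (z - node a h i) 0) h := by
  rw [ramp, ← ReLU_sub_ReLU_sub hh]; congr 2; simp only [node]; push_cast; ring

lemma monotone_ramp (hh : 0 ≤ h) (i : ℕ) : Monotone (ramp a h i) := fun u v huv => by
  simp only [ramp_eq_min_max hh]; gcongr

lemma sum_ramp_sub_le {u v : ℝ} (huv : u ≤ v) :
    ∑ i ∈ Finset.range N, (ramp a h i v - ramp a h i u) ≤ v - u := by
  simp only [ramp]
  rw [Finset.sum_sub_distrib, Finset.sum_range_sub' (fun i => ReLU (v - node a h i)),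
    Finset.sum_range_sub' (fun i => ReLU (u - node a h i))]
  linarith [ReLU_sub_ReLU_le (sub_le_sub_right huv (node a h 0)),
    monotone_ReLU (sub_le_sub_right huv (node a h N))]

lemma abs_slope_le {K : ℝ} (hh : 0 < h) (hf : ∀ x y, |f x - f y| ≤ K * |x - y|) (i : ℕ) :
    |slope f a h i| ≤ K := by
  rw [slope, abs_div, abs_of_pos hh, div_le_iff₀ hh]
  have hstep : node a h (i + 1) - node a h i = h := by simp only [node]; push_cast; ring
  simpa only [hstep, abs_of_pos hh] using hf (node a h (i + 1)) (node a h i)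

lemma ramp_node (hh : 0 < h) (i j : ℕ) :
    ramp a h i (node a h j) = if i < j then h else 0 := by
  have hdiff : node a h j - node a h i = ((j : ℝ) - i) * h := by simp only [node]; ring
  rw [ramp_eq_min_max hh.le, hdiff]
  split_ifs with hij
  · have : (1 : ℝ) ≤ (j : ℝ) - i := by
      rw [le_sub_iff_add_le']; exact_mod_cast hij
    rw [max_eq_left (by nlinarith), min_eq_right (by nlinarith)]
  · have : (j : ℝ) - i ≤ 0 := by
      rw [sub_nonpos]; exact_mod_cast not_lt.mp hij
    rw [max_eq_right (by nlinarith), min_eq_left hh.le]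

lemma interp_node (hh : 0 < h) {j : ℕ} (hj : j ≤ N) :
    interp f a h N (node a h j) = f (node a h j) := by
  have hterm : ∀ i ∈ Finset.range N, slope f a h i * ramp a h i (node a h j) =
      if i < j then f (node a h (i + 1)) - f (node a h i) else 0 := by
    intro i _
    rw [ramp_node hh, slope]
    split_ifs
    · field_simp
    · rw [mul_zero]
  have hfilter : (Finset.range N).filter (· < j) = Finset.range j := by
    ext i; simp only [Finset.mem_filter, Finset.mem_range]; omega
  rw [interp, Finset.sum_congr rfl hterm, Finset.sum_ite, Finset.sum_const_zero, add_zero,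
    hfilter, Finset.sum_range_sub (fun i => f (node a h i))]
  simp [node]

lemma abs_interp_sub_le {K : ℝ} (hh : 0 < h) (hf : ∀ x y, |f x - f y| ≤ K * |x - y|)
    (u v : ℝ) : |interp f a h N u - interp f a h N v| ≤ K * |u - v| := by
  wlog huv : v ≤ u generalizing u v
  · rw [abs_sub_comm, abs_sub_comm u]; exact this v u (le_of_not_ge huv)
  have hK := lipschitz_const_nonneg hf
  have hincr : ∀ i, 0 ≤ ramp a h i u - ramp a h i v :=
    fun i => sub_nonneg.mpr (monotone_ramp hh.le i huv)
  calc |interp f a h N u - interp f a h N v|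
      = |∑ i ∈ Finset.range N, slope f a h i * (ramp a h i u - ramp a h i v)| := by
        simp only [interp, mul_sub, Finset.sum_sub_distrib, add_sub_add_left_eq_sub]
    _ ≤ ∑ i ∈ Finset.range N, K * (ramp a h i u - ramp a h i v) := by
        refine (Finset.abs_sum_le_sum_abs _ _).trans (Finset.sum_le_sum fun i _ => ?_)
        rw [abs_mul, abs_of_nonneg (hincr i)]
        exact mul_le_mul_of_nonneg_right (abs_slope_le hh hf i) (hincr i)
    _ ≤ K * |u - v| := by
        rw [← Finset.mul_sum, abs_of_nonneg (sub_nonneg.mpr huv)]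
        exact mul_le_mul_of_nonneg_left (sum_ramp_sub_le N huv) hK

lemma exists_node_near (hh : 0 < h) {z : ℝ} (hz : a ≤ z) (hz' : z ≤ a + N * h) :
    ∃ j ≤ N, |z - node a h j| ≤ h := by
  have hq : 0 ≤ (z - a) / h := div_nonneg (sub_nonneg.mpr hz) hh.le
  refine ⟨⌊(z - a) / h⌋₊, ?_, ?_⟩
  · have : (z - a) / h ≤ N := by rw [div_le_iff₀ hh]; linarith
    simpa using Nat.floor_le_floor this
  · have h1 := Nat.floor_le hq
    have h2 := Nat.lt_floor_add_one ((z - a) / h)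
    rw [le_div_iff₀ hh] at h1
    rw [div_lt_iff₀ hh] at h2
    rw [abs_le, node]; constructor <;> nlinarith

lemma abs_sub_interp_le {K : ℝ} (hh : 0 < h) (hf : ∀ x y, |f x - f y| ≤ K * |x - y|)
    {z : ℝ} (hz : a ≤ z) (hz' : z ≤ a + N * h) : |f z - interp f a h N z| ≤ 2 * K * h := by
  obtain ⟨j, hjN, hj⟩ := exists_node_near N hh hz hz'
  have hK := lipschitz_const_nonneg hf
  calc |f z - interp f a h N z|
      = |(f z - f (node a h j)) + (interp f a h N (node a h j) - interp f a h N z)| := by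
        rw [interp_node N hh hjN]; ring_nf
    _ ≤ K * |z - node a h j| + K * |node a h j - z| :=
        (abs_add_le _ _).trans (add_le_add (hf _ _) (abs_interp_sub_le N hh hf _ _))
    _ ≤ 2 * K * h := by rw [abs_sub_comm (node a h j)]; nlinarith

lemma interp_eq_sum_ReLU (z : ℝ) :
    interp f a h N z =
      ∑ i ∈ Finset.range (2 * N), edgeSlope f a h N i * ReLU (z - edgeNode a h N i) + f a := by
  have hlow : ∀ i ∈ Finset.range N, edgeSlope f a h N i * ReLU (z - edgeNode a h N i) =
      slope f a h i * ReLU (z - node a h i) := fun i hi => by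
    simp [edgeSlope, edgeNode, Finset.mem_range.mp hi]
  have hhigh : ∀ i, edgeSlope f a h N (N + i) * ReLU (z - edgeNode a h N (N + i)) =
      -(slope f a h i * ReLU (z - node a h (i + 1))) := fun i => by
    simp [edgeSlope, edgeNode]
  rw [two_mul, Finset.sum_range_add, Finset.sum_congr rfl hlow]
  simp only [hhigh, Finset.sum_neg_distrib, interp, ramp, mul_sub, Finset.sum_sub_distrib]
  ring

end PiecewiseLinear

lemma trunc_emb (n : ℕ) (x : EuclideanSpace ℝ (Fin n)) : trunc n (emb n x) = emb n x := by
  funext j; simp only [trunc, emb]; split_ifs <;> simp_all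

lemma sum_range_emb_mul_emb (n : ℕ) (x y : EuclideanSpace ℝ (Fin n)) :
    ∑ j ∈ Finset.range n, emb n x j * emb n y j = ∑ j : Fin n, x j * y j := by
  rw [← Fin.sum_univ_eq_sum_range]; simp [emb]

namespace NN

def shallow (d M : ℕ) (w : EuclideanSpace ℝ (Fin d)) (τ c : ℕ → ℝ) (β : ℝ) : NN where
  Dm := 1
  l k := if k = 0 then d else if k = 1 then M else 1
  V k _ j := if k = 0 then emb d w j else c j
  b k i := if k = 0 then -τ i else β

variable {d M : ℕ} {w : EuclideanSpace ℝ (Fin d)} {τ c : ℕ → ℝ} {β : ℝ}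

lemma P_shallow : (shallow d M w τ c β).P = M * (d + 1) + (M + 1) := by
  simp [P, depth, shallow, Finset.sum_range_succ]

lemma realScalar_shallow (x : EuclideanSpace ℝ (Fin d)) :
    (shallow d M w τ c β).realScalar ReLU d x =
      ∑ i ∈ Finset.range M, c i * ReLU (∑ j : Fin d, w j * x j - τ i) + β := by
  simp [realScalar, fullReal, shallow, hidden, aff, trunc_emb, sum_range_emb_mul_emb,
    sub_eq_add_neg]

end NN

lemma norm_le_sqrt_card_mul {n : ℕ} {S : ℝ} (hS : 0 ≤ S) (θ : EuclideanSpace ℝ (Fin n))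
    (hθ : ∀ i, |θ i| ≤ S) : ‖θ‖ ≤ Real.sqrt n * S := by
  rw [EuclideanSpace.norm_eq, ← Real.sqrt_sq hS, ← Real.sqrt_mul (Nat.cast_nonneg _)]
  refine Real.sqrt_le_sqrt ?_
  calc ∑ i, ‖θ i‖ ^ 2 ≤ ∑ _i : Fin n, S ^ 2 := by
        gcongr with i
        rw [Real.norm_eq_abs]
        exact hθ i
    _ = n * S ^ 2 := by simp

lemma abs_sum_mul_sub_sum_mul_le {n : ℕ} (θ x y : EuclideanSpace ℝ (Fin n)) :
    |∑ i, θ i * x i - ∑ i, θ i * y i| ≤ ‖θ‖ * ‖x - y‖ := by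
  have : ∑ i, θ i * x i - ∑ i, θ i * y i = inner ℝ θ (x - y) := by
    simp [PiLp.inner_apply, mul_sub, Finset.sum_sub_distrib, mul_comm]
  rw [this]
  exact abs_real_inner_le_norm _ _

lemma abs_sum_mul_le {n : ℕ} {S r : ℝ} (θ x : EuclideanSpace ℝ (Fin n))
    (hθ : ∀ i, |θ i| ≤ S) (hx : ∀ i, |x i| ≤ r) : |∑ i, θ i * x i| ≤ n * S * r := by
  calc |∑ i, θ i * x i| ≤ ∑ i, |θ i| * |x i| := by
        simpa only [abs_mul] using Finset.abs_sum_le_sum_abs (fun i => θ i * x i) Finset.univ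
    _ ≤ ∑ _i : Fin n, S * r := by
        gcongr with i
        · exact (abs_nonneg _).trans (hθ i)
        · exact hθ i
        · exact hx i
    _ = n * S * r := by simp [mul_assoc]

namespace PiecewiseLinear

variable (f : ℝ → ℝ) (a h : ℝ) (N : ℕ) {d : ℕ} (w : EuclideanSpace ℝ (Fin d))

def interpNet : NN := NN.shallow d (2 * N) w (edgeNode a h N) (edgeSlope f a h N) (f a)

variable {f a h N w}

lemma realScalar_interpNet (x : EuclideanSpace ℝ (Fin d)) :
    (interpNet f a h N w).realScalar ReLU d x = interp f a h N (∑ j : Fin d, w j * x j) := by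
  rw [interpNet, NN.realScalar_shallow, interp_eq_sum_ReLU]

lemma P_interpNet_le {K S r ε : ℝ} (hK : 1 ≤ K) (hr : 1 ≤ r) (hS : 1 ≤ S) (hd : 0 < d)
    (hε : 0 < ε) (hε1 : ε ≤ 1) (hN : (N : ℝ) < 4 * K * (d * S * r) / ε + 1) :
    ((interpNet f a h N w).P : ℝ) ≤ 1 / 7 * 10 ^ 3 * K ^ 2 * r * S ^ 2 * (d : ℝ) ^ 6 * ε⁻¹ := by
  have hd1 : (1 : ℝ) ≤ d := by exact_mod_cast hd
  set A := K * (d * S * r) / ε with hA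
  have hA1 : 1 ≤ A := by
    have hdSr : 1 ≤ d * S * r :=
      one_le_mul_of_one_le_of_one_le (one_le_mul_of_one_le_of_one_le hd1 hS) hr
    rw [hA, le_div_iff₀ hε]
    nlinarith [one_le_mul_of_one_le_of_one_le hK hdSr]
  have hN' : (N : ℝ) ≤ 5 * A := by
    have : 4 * K * (d * S * r) / ε = 4 * A := by rw [hA]; ring
    linarith
  have hKS : K * S * d ^ 2 ≤ K ^ 2 * S ^ 2 * d ^ 6 := by
    have hK2 : K ≤ K ^ 2 := by nlinarith
    have hS2 : S ≤ S ^ 2 := by nlinarith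
    have hd6 : (d : ℝ) ^ 2 ≤ d ^ 6 := pow_le_pow_right₀ hd1 (by norm_num)
    exact mul_le_mul (mul_le_mul hK2 hS2 (by positivity) (by positivity)) hd6
      (by positivity) (by positivity)
  rw [interpNet, NN.P_shallow]
  push_cast
  calc 2 * N * ((d : ℝ) + 1) + (2 * N + 1) ≤ 2 * (5 * A) * (3 * d) + A * d := by
        nlinarith
    _ = 31 * (K * S * d ^ 2) * r * ε⁻¹ := by rw [hA]; ring
    _ ≤ 1000 / 7 * (K ^ 2 * S ^ 2 * d ^ 6) * r * ε⁻¹ := by gcongr; norm_num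
    _ = 1 / 7 * 10 ^ 3 * K ^ 2 * r * S ^ 2 * (d : ℝ) ^ 6 * ε⁻¹ := by ring

end PiecewiseLinear

theorem ridge_function_approximation_general (K r S : ℝ) (hK : 1 ≤ K) (hr : 1 ≤ r) (hS : 1 ≤ S)
    (θ : (d : ℕ) → EuclideanSpace ℝ (Fin d)) (hθ : ∀ d : ℕ, ∀ i, |θ d i| ≤ S)
    (f : ℝ → ℝ) (hLip : ∀ x y : ℝ, |f x - f y| ≤ K * |x - y|) :
    ∀ d : ℕ, 0 < d → ∀ ε : ℝ, 0 < ε → ε ≤ 1 →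
      ∃ φ : NN, φ.l 0 = d ∧ φ.l φ.depth = 1 ∧
        (∀ x : EuclideanSpace ℝ (Fin d), (∀ i, |x i| ≤ r) →
          |f (∑ i : Fin d, θ d i * x i) - φ.realScalar ReLU d x| ≤ ε) ∧
        (∀ x y : EuclideanSpace ℝ (Fin d),
          |φ.realScalar ReLU d x - φ.realScalar ReLU d y| ≤
            Real.sqrt d * K * S * ‖x - y‖) ∧
        ((φ.P : ℝ) ≤ (1 / 7) * 10 ^ 3 * K ^ 2 * r * S ^ 2 * (d : ℝ) ^ 6 * ε⁻¹) := by
  intro d hd ε hε hε1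
  set R := d * S * r
  set N := ⌈4 * K * R / ε⌉₊
  have hN : 0 < (N : ℝ) := by simp only [N, Nat.cast_pos, Nat.ceil_pos]; positivity
  have hh : 0 < 2 * R / N := by positivity
  have hgrid : -R + N * (2 * R / N) = R := by field_simp; ring
  have hmesh : 2 * K * (2 * R / N) ≤ ε := by
    rw [← mul_div_assoc, div_le_iff₀ hN]
    linarith [(div_le_iff₀ hε).mp (Nat.le_ceil (4 * K * R / ε))]
  refine ⟨PiecewiseLinear.interpNet f (-R) (2 * R / N) N (θ d), rfl, rfl, fun x hx => ?_,
    fun x y => ?_, PiecewiseLinear.P_interpNet_le hK hr hS hd hε hε1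
      (Nat.ceil_lt_add_one (by positivity))⟩
  · obtain ⟨hlo, hhi⟩ := abs_le.mp (abs_sum_mul_le (θ d) x (hθ d) hx)
    rw [PiecewiseLinear.realScalar_interpNet]
    exact (PiecewiseLinear.abs_sub_interp_le N hh hLip hlo (hgrid.symm ▸ hhi)).trans hmesh
  · rw [PiecewiseLinear.realScalar_interpNet, PiecewiseLinear.realScalar_interpNet]
    calc _ ≤ K * (‖θ d‖ * ‖x - y‖) :=
          (PiecewiseLinear.abs_interp_sub_le N hh hLip _ _).trans
            (mul_le_mul_of_nonneg_left (abs_sum_mul_sub_sum_mul_le _ _ _) (by linarith))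
      _ ≤ K * (Real.sqrt d * S * ‖x - y‖) := by
          gcongr
          exact norm_le_sqrt_card_mul (by linarith) _ (hθ d)
      _ = Real.sqrt d * K * S * ‖x - y‖ := by ring

/-- Proposition 7.7: ridge functions based on a Lipschitz function can be
approximated by ReLU networks without the curse of dimensionality. -/
theorem ridge_function_approximation (K r S : ℝ) (hK : 1 ≤ K) (hr : 1 ≤ r) (hS : 1 ≤ S)
    (θ : (d : ℕ) → EuclideanSpace ℝ (Fin d)) (hθ : ∀ d : ℕ, ∀ i, |θ d i| ≤ S)
    (f : ℝ → ℝ) (hLip : ∀ x y : ℝ, |f x - f y| ≤ K * |x - y|) (h0 : |f 0| ≤ K) :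
    ∀ d : ℕ, 0 < d → ∀ ε : ℝ, 0 < ε → ε ≤ 1 →
      ∃ φ : NN, φ.l 0 = d ∧ φ.l φ.depth = 1 ∧
        (∀ x : EuclideanSpace ℝ (Fin d), (∀ i, |x i| ≤ r) →
          |f (∑ i : Fin d, θ d i * x i) - φ.realScalar ReLU d x| ≤ ε) ∧
        (∀ x y : EuclideanSpace ℝ (Fin d),
          |φ.realScalar ReLU d x - φ.realScalar ReLU d y| ≤
            Real.sqrt d * K * S * ‖x - y‖) ∧
        ((φ.P : ℝ) ≤ (1 / 7) * 10 ^ 3 * K ^ 2 * r * S ^ 2 * (d : ℝ) ^ 6 * ε⁻¹) :=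
  ridge_function_approximation_general K r S hK hr hS θ hθ f hLip
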